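/- arXiv:1906.09959 — 7 statements merged into one kernel-verified Lean document; each statement's English description precedes it below -/
import Mathlib

section
/- Let φ: G → G be an endomorphism of a group G, and let H ≤ G be a subgroup such that φ(H) ⊆ H and for every x ∈ G there exists n ∈ ℕ with φⁿ(x) ∈ H. Then the map sending a φ_H-conjugacy class {x}_{φ_H} in H to the φ-conjugacy class {x}_φ in G is a bijection between the set of φ_H-conjugacy classes of H and the set of φ-conjugacy classes of G; in particular R(φ) = R(φ_H). -/
/-!
Every `x` is `φ`-conjugate to `φ x` (by `x⁻¹`), hence to all its iterates `φⁿ x`; as some of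
these lie in `H`, every `φ`-class meets `H`. If `x, y ∈ H` satisfy `y = g x φ(g)⁻¹`, choose `n`
with `φⁿ g ∈ H`: then `φⁿ y = φⁿ g · φⁿ x · φ(φⁿ g)⁻¹` is a `φ_H`-conjugacy, and `φⁿ x`, `φⁿ y`
are `φ_H`-conjugate to `x`, `y`. So the classes of `φ_H` inject into those of `φ`.
-/

section

variable {G K : Type*} [Group G] [Group K]

def TwistedConj (φ : G →* G) (x y : G) : Prop := ∃ g : G, y = g * x * (φ g)⁻¹

def ReidemeisterClasses (φ : G →* G) : Type _ := Quot (TwistedConj φ)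

namespace TwistedConj

variable (φ : G →* G)

theorem equivalence : Equivalence (TwistedConj φ) where
  refl x := ⟨1, by simp⟩
  symm := fun ⟨g, hg⟩ => ⟨g⁻¹, by simp [hg, mul_assoc]⟩
  trans := fun ⟨g, hg⟩ ⟨k, hk⟩ => ⟨k * g, by simp [hg, hk, mul_assoc]⟩

theorem self_apply (x : G) : TwistedConj φ x (φ x) := ⟨x⁻¹, by simp⟩

theorem map_eq {ψ : K →* K} (f : G →* K) (hf : ∀ x, f (φ x) = ψ (f x)) {x y g : G}
    (h : y = g * x * (φ g)⁻¹) : f y = f g * f x * (ψ (f g))⁻¹ := by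
  rw [h, map_mul, map_mul, map_inv, hf]

theorem map {φ} {ψ : K →* K} (f : G →* K) (hf : ∀ x, f (φ x) = ψ (f x)) {x y : G}
    (h : TwistedConj φ x y) : TwistedConj ψ (f x) (f y) :=
  let ⟨g, hg⟩ := h
  ⟨f g, map_eq φ f hf hg⟩

end TwistedConj

namespace ReidemeisterClasses

def mk (φ : G →* G) (x : G) : ReidemeisterClasses φ := Quot.mk _ x

theorem mk_eq_mk_iff (φ : G →* G) {x y : G} : mk φ x = mk φ y ↔ TwistedConj φ x y :=
  (TwistedConj.equivalence φ).quot_mk_eq_iff x y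

theorem mk_iterate (φ : G →* G) (n : ℕ) (x : G) : mk φ (φ^[n] x) = mk φ x := by
  induction n with
  | zero => rfl
  | succ n ih =>
    rw [Function.iterate_succ_apply', ← ih]
    exact (Quot.sound (TwistedConj.self_apply φ _)).symm

def map {φ : G →* G} {ψ : K →* K} (f : G →* K) (hf : ∀ x, f (φ x) = ψ (f x)) :
    ReidemeisterClasses φ → ReidemeisterClasses ψ :=
  Quot.map f fun _ _ => TwistedConj.map f hf

end ReidemeisterClasses

namespace MonoidHom

def restrictEnd (φ : G →* G) (H : Subgroup G) (hφH : ∀ h ∈ H, φ h ∈ H) : H →* H :=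
  (φ.comp H.subtype).codRestrict H fun x => hφH x x.2

variable (φ : G →* G) (H : Subgroup G) (hφH : ∀ h ∈ H, φ h ∈ H)

theorem coe_iterate_restrictEnd (n : ℕ) (x : H) :
    ((φ.restrictEnd H hφH)^[n] x : G) = φ^[n] x := by
  induction n generalizing x with
  | zero => rfl
  | succ n ih => exact ih (φ.restrictEnd H hφH x)

theorem twistedConj_restrictEnd_iff {x y : H} :
    TwistedConj (φ.restrictEnd H hφH) x y ↔ ∃ g : H, (y : G) = g * x * (φ g)⁻¹ :=
  exists_congr fun _ => Subtype.ext_iff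

end MonoidHom

theorem ReidemeisterClasses.map_subtype_bijective (φ : G →* G) (H : Subgroup G)
    (hφH : ∀ h ∈ H, φ h ∈ H) (hev : ∀ x : G, ∃ n : ℕ, (⇑φ)^[n] x ∈ H) :
    Function.Bijective (map (ψ := φ) H.subtype fun _ => rfl :
      ReidemeisterClasses (φ.restrictEnd H hφH) → ReidemeisterClasses φ) := by
  set φH := φ.restrictEnd H hφH
  constructor
  · rintro ⟨x⟩ ⟨y⟩ hxy
    obtain ⟨g, hg⟩ := (mk_eq_mk_iff φ).1 hxy
    obtain ⟨n, hn⟩ := hev g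
    let φn : Monoid.End G := (show Monoid.End G from φ) ^ n
    have hcomm : ∀ z, φn (φ z) = φ (φn z) := Function.Commute.iterate_self φ n
    change mk φH x = mk φH y
    rw [← mk_iterate φH n x, ← mk_iterate φH n y, mk_eq_mk_iff]
    refine ⟨⟨_, hn⟩, Subtype.ext ?_⟩
    change (φH^[n] y : G) = φ^[n] g * (φH^[n] x : G) * (φ (φ^[n] g))⁻¹
    rw [MonoidHom.coe_iterate_restrictEnd, MonoidHom.coe_iterate_restrictEnd]
    exact TwistedConj.map_eq φ φn hcomm hg
  · rintro ⟨x⟩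
    obtain ⟨n, hn⟩ := hev x
    exact ⟨mk φH ⟨_, hn⟩, mk_iterate φ n x⟩

end

/-- If `φ(H) ⊆ H` and every element is eventually mapped into `H` by some iterate of `φ`,
then intersecting with `H` gives a bijection between twisted conjugacy classes of `φ_H`
on `H` and those of `φ` on `G`; in particular `R(φ) = R(φ_H)`. -/
theorem reidemeister_restriction {G : Type*} [Group G] (φ : G →* G) (H : Subgroup G)
    (hφH : ∀ h ∈ H, φ h ∈ H)
    (hev : ∀ x : G, ∃ n : ℕ, (⇑φ)^[n] x ∈ H) :
    ∃ e : Quot (fun x y : H => ∃ g : H, (y : G) = g * x * (φ g)⁻¹) ≃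
          Quot (fun x y : G => ∃ g : G, y = g * x * (φ g)⁻¹),
      ∀ x : H, e (Quot.mk _ x) = Quot.mk _ (x : G) :=
  ⟨(Quot.congr (Equiv.refl H) fun _ _ => (φ.twistedConj_restrictEnd_iff H hφH).symm).trans
      (Equiv.ofBijective _ (ReidemeisterClasses.map_subtype_bijective φ H hφH hev)),
    fun _ => rfl⟩
end

section
/- Let X be a set, f: X → X a map, and suppose for every n ≥ 1 the set Fix(fⁿ) of points fixed by fⁿ is finite, with cardinality F(n). Then for every n ≥ 1, ∑_{d | n} μ(d) · F(n/d) ≡ 0 (mod n), where μ is the Möbius function. -/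
/-!
The points of least period `n` are permuted by `f` in orbits of length exactly `n`, so `n` divides
their number `P n`. Every fixed point of `fⁿ` has least period dividing `n`, whence
`F n = ∑_{d ∣ n} P d`, and Möbius inversion turns the Gauss sum into `P n`.
-/

theorem Cycle.mem_toFinset {α : Type*} [DecidableEq α] {a : α} {s : Cycle α} :
    a ∈ s.toFinset ↔ a ∈ s :=
  Quot.inductionOn s fun l => by
    rw [Cycle.mk_eq_coe, Cycle.coe_toFinset, List.mem_toFinset, Cycle.mem_coe_iff]

namespace Function

variable {α : Type*} {f : α → α} {x y : α}

theorem card_toFinset_periodicOrbit [DecidableEq α] (f : α → α) (x : α) :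
    (periodicOrbit f x).toFinset.card = minimalPeriod f x := by
  rw [periodicOrbit, Cycle.coe_toFinset,
    List.toFinset_card_of_nodup (Cycle.nodup_coe_iff.mp nodup_periodicOrbit), List.length_map,
    List.length_range]

theorem periodicOrbit_eq_iff_mem (hx : x ∈ periodicPts f) (hy : y ∈ periodicPts f) :
    periodicOrbit f y = periodicOrbit f x ↔ y ∈ periodicOrbit f x := by
  refine ⟨fun h => h ▸ self_mem_periodicOrbit hy, fun h => ?_⟩
  obtain ⟨k, rfl⟩ := (mem_periodicOrbit_iff hx).mp h
  exact periodicOrbit_apply_iterate_eq hx k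

theorem dvd_ncard_setOf_minimalPeriod_eq (f : α → α) {n : ℕ} (hn : 0 < n) :
    n ∣ {x | minimalPeriod f x = n}.ncard := by
  classical
  rcases Set.finite_or_infinite {x | minimalPeriod f x = n} with hS | hS
  · rw [Set.ncard_eq_toFinset_card _ hS, Finset.card_eq_sum_card_image (periodicOrbit f)]
    refine Finset.dvd_sum fun c hc => ?_
    obtain ⟨x, hx, rfl⟩ := Finset.mem_image.mp hc
    have hxn : minimalPeriod f x = n := hS.mem_toFinset.mp hx
    have periodic : ∀ {y}, minimalPeriod f y = n → y ∈ periodicPts f := fun hy =>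
      minimalPeriod_pos_iff_mem_periodicPts.mp (hy ▸ hn)
    have fiber : {y ∈ hS.toFinset | periodicOrbit f y = periodicOrbit f x} =
        (periodicOrbit f x).toFinset := by
      ext y
      simp only [Finset.mem_filter, Set.Finite.mem_toFinset, Set.mem_ofPred_eq, Cycle.mem_toFinset]
      constructor
      · rintro ⟨hyn, horbit⟩
        exact (periodicOrbit_eq_iff_mem (periodic hxn) (periodic hyn)).mp horbit
      · intro hy
        obtain ⟨k, rfl⟩ := (mem_periodicOrbit_iff (periodic hxn)).mp hy
        -- orbit-mates have the same least period, the common length of their orbit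
        have horbit := periodicOrbit_apply_iterate_eq (periodic hxn) k
        refine ⟨?_, horbit⟩
        rw [← periodicOrbit_length, horbit, periodicOrbit_length, hxn]
    rw [fiber, card_toFinset_periodicOrbit, hxn]
  · rw [hS.ncard]
    exact dvd_zero n

theorem ncard_ptsOfPeriod_eq_sum_divisors {n : ℕ} (hn : 0 < n) (h : (ptsOfPeriod f n).Finite) :
    (ptsOfPeriod f n).ncard = ∑ d ∈ n.divisors, {x | minimalPeriod f x = d}.ncard := by
  classical
  have hmaps : (h.toFinset : Set α).MapsTo (minimalPeriod f) n.divisors := fun x hx =>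
    Nat.mem_divisors.mpr ⟨IsPeriodicPt.minimalPeriod_dvd (h.mem_toFinset.mp hx), hn.ne'⟩
  rw [Set.ncard_eq_toFinset_card _ h, Finset.card_eq_sum_card_fiberwise hmaps]
  refine Finset.sum_congr rfl fun d hd => ?_
  rw [← Set.ncard_coe_finset]
  congr 1
  ext x
  simp only [Finset.coe_filter, Set.Finite.mem_toFinset, mem_ptsOfPeriod, Set.mem_ofPred_eq,
    and_iff_right_iff_imp]
  rintro rfl
  exact isPeriodicPt_iff_minimalPeriod_dvd.mpr (Nat.dvd_of_mem_divisors hd)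

end Function

open ArithmeticFunction ArithmeticFunction.Moebius in
/-- Gauss congruences for fixed point counts of iterates of a map. -/
theorem gauss_congruence_fixed_points {X : Type*} (f : X → X)
    (hfin : ∀ n : ℕ, 1 ≤ n → {x : X | f^[n] x = x}.Finite) :
    ∀ n : ℕ, 1 ≤ n →
      (n : ℤ) ∣ ∑ d ∈ n.divisors, μ d * ({x : X | f^[n / d] x = x}.ncard : ℤ) := by
  intro n hn
  have hsum : ∀ k > 0, ∑ d ∈ k.divisors, ({x | Function.minimalPeriod f x = d}.ncard : ℤ) =
      ({x : X | f^[k] x = x}.ncard : ℤ) := fun k hk => by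
    exact_mod_cast (Function.ncard_ptsOfPeriod_eq_sum_divisors hk (hfin k hk)).symm
  have hinv := sum_eq_iff_sum_mul_moebius_eq.mp hsum n hn
  simp only [Int.cast_id] at hinv
  rw [Nat.sum_divisorsAntidiagonal (fun d e => μ d * ({x : X | f^[e] x = x}.ncard : ℤ))] at hinv
  rw [hinv]
  exact_mod_cast Function.dvd_ncard_setOf_minimalPeriod_eq f hn
end

section
/- Let X be a finite set and f: X → X a map with a the number of periodic orbits and b the number of periodic points of f. Then the zeta function ζ_f(z) = ∏_γ (1 - z^{#γ})⁻¹ (product over periodic orbits) satisfies the functional equation ζ_f(1/z) = (-1)^a · z^b · ζ_f(z) as rational functions. -/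
/-!
Since `1 - z⁻¹ ^ n = -z⁻¹ ^ n * (1 - z ^ n)`, each factor of `ζ_f(1/z)` is `-z ^ #γ` times the
corresponding factor of `ζ_f(z)`. Multiplying over the `a` periodic orbits gives
`(-1) ^ a * z ^ (∑_γ #γ)`, and `∑_γ #γ = b` because the periodic orbits partition the periodic
points.
-/

open Function Set

theorem inv_one_sub_inv_pow {K : Type*} [Field K] {z : K} (hz : z ≠ 0) (n : ℕ) :
    (1 - z⁻¹ ^ n)⁻¹ = -z ^ n * (1 - z ^ n)⁻¹ := by
  have hzn : z ^ n ≠ 0 := pow_ne_zero n hz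
  have : (1 : K) - z⁻¹ ^ n = -(z ^ n)⁻¹ * (1 - z ^ n) := by
    rw [inv_pow, neg_mul, mul_sub, mul_one, inv_mul_cancel₀ hzn, neg_sub]
  rw [this, mul_inv, inv_neg, inv_inv]

theorem finprod_mem_inv_one_sub_inv_pow {ι K : Type*} [Field K] {S : Set ι} (hS : S.Finite)
    {z : K} (hz : z ≠ 0) (n : ι → ℕ) :
    ∏ᶠ i ∈ S, (1 - z⁻¹ ^ n i)⁻¹ =
      (-1) ^ S.ncard * z ^ (∑ᶠ i ∈ S, n i) * ∏ᶠ i ∈ S, (1 - z ^ n i)⁻¹ := by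
  simp_rw [inv_one_sub_inv_pow hz]
  rw [← hS.coe_toFinset, finprod_mem_coe_finset, finprod_mem_coe_finset, finsum_mem_coe_finset,
    ncard_coe_finset, Finset.prod_mul_distrib, Finset.prod_neg, Finset.prod_pow_eq_pow_sum]

theorem finsum_mem_image_ncard_of_eq_fiber {α : Type*} {P : Set α} (hP : P.Finite)
    {o : α → Set α} (ho : ∀ x ∈ P, ∀ y, y ∈ o x ↔ y ∈ P ∧ o y = o x) :
    ∑ᶠ s ∈ o '' P, s.ncard = P.ncard := by
  classical
  set T := hP.toFinset
  have hfiber : ∀ s ∈ T.image o, s.ncard = (T.filter (o · = s)).card := by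
    simp only [Finset.mem_image, Finite.mem_toFinset, T]
    rintro s ⟨x, hx, rfl⟩
    rw [← ncard_coe_finset]
    congr 1
    ext y
    simp [ho x hx]
  rw [← hP.coe_toFinset, ← Finset.coe_image, finsum_mem_coe_finset, Finset.sum_congr rfl hfiber,
    ← Finset.card_eq_sum_card_fiberwise fun x hx => Finset.mem_image_of_mem o hx, ncard_coe_finset]

namespace Function

variable {α : Type*} {f : α → α} {x : α}

theorem iterate_mem_periodicPts (hx : x ∈ periodicPts f) (n : ℕ) : f^[n] x ∈ periodicPts f :=
  let ⟨_, hm, hxm⟩ := hx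
  mk_mem_periodicPts hm (hxm.apply_iterate n)

theorem range_iterate_apply_iterate (hx : x ∈ periodicPts f) (n : ℕ) :
    range (f^[·] (f^[n] x)) = range (f^[·] x) := by
  ext y
  rw [mem_range, mem_range, ← mem_periodicOrbit_iff (iterate_mem_periodicPts hx n),
    periodicOrbit_apply_iterate_eq hx, mem_periodicOrbit_iff hx]

theorem mem_range_iterate_iff (hx : x ∈ periodicPts f) (y : α) :
    y ∈ range (f^[·] x) ↔ y ∈ periodicPts f ∧ range (f^[·] y) = range (f^[·] x) := by
  constructor
  · rintro ⟨n, rfl⟩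
    exact ⟨iterate_mem_periodicPts hx n, range_iterate_apply_iterate hx n⟩
  · rintro ⟨-, hy⟩
    exact hy ▸ ⟨0, rfl⟩

theorem finsum_mem_ncard_range_iterate (h : (periodicPts f).Finite) :
    ∑ᶠ s ∈ (fun x => range (f^[·] x)) '' periodicPts f, s.ncard = (periodicPts f).ncard :=
  finsum_mem_image_ncard_of_eq_fiber h fun _ => mem_range_iterate_iff

end Function

/-- Functional equation `ζ_f(1/z) = (-1)^a z^b ζ_f(z)` for the zeta function
`ζ_f(z) = ∏_γ (1 - z^{#γ})⁻¹` of a self-map of a finite set, where `a` is the number of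
periodic orbits and `b` the number of periodic points. -/
theorem zeta_finite_set_functional_equation {X : Type*} [Fintype X] (f : X → X)
    (z : ℂ) (hz : z ≠ 0) :
    (∏ᶠ (s : Set X) (_ : s ∈ {s : Set X |
        ∃ x : X, (∃ n : ℕ, 1 ≤ n ∧ f^[n] x = x) ∧ s = {y : X | ∃ k : ℕ, f^[k] x = y}}),
      (1 - z⁻¹ ^ s.ncard)⁻¹) =
    (-1) ^ ({s : Set X |
        ∃ x : X, (∃ n : ℕ, 1 ≤ n ∧ f^[n] x = x) ∧ s = {y : X | ∃ k : ℕ, f^[k] x = y}}.ncard) *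
      z ^ ({x : X | ∃ n : ℕ, 1 ≤ n ∧ f^[n] x = x}.ncard) *
      ∏ᶠ (s : Set X) (_ : s ∈ {s : Set X |
          ∃ x : X, (∃ n : ℕ, 1 ≤ n ∧ f^[n] x = x) ∧ s = {y : X | ∃ k : ℕ, f^[k] x = y}}),
        (1 - z ^ s.ncard)⁻¹ := by
  have hperiodic : {x : X | ∃ n : ℕ, 1 ≤ n ∧ f^[n] x = x} = periodicPts f := rfl
  have horbits : {s : Set X |
      ∃ x : X, (∃ n : ℕ, 1 ≤ n ∧ f^[n] x = x) ∧ s = {y : X | ∃ k : ℕ, f^[k] x = y}} =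
      (fun x => range (f^[·] x)) '' periodicPts f :=
    ext fun _ => exists_congr fun _ => and_congr Iff.rfl eq_comm
  rw [hperiodic, horbits, finprod_mem_inv_one_sub_inv_pow (toFinite _) hz,
    finsum_mem_ncard_range_iterate (toFinite _)]
end

section
/- Let X be a set and f: X → X a map with f^m = id for least period m, with Z(n) = |Fix(fⁿ)| finite for all n. Define for each divisor d of m the integer P(d) = ∑_{d₁ | d} μ(d₁) Z(f^{d/d₁}). Then as formal power series, exp(∑_{n≥1} Z(n) zⁿ/n) = ∏_{d | m} (1 - z^d)^{-P(d)/d}, i.e., the m-th power of the zeta function equals ∏_{d|m} (1 - z^d)^{-m·P(d)/d}. -/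
/-!
Since `f^[m] = id`, the point `x` is fixed by `f^[n]` iff it is fixed by `f^[gcd n m]`, so
`Z n = Z (gcd n m) = ∑_{e ∣ gcd n m} P e` by Möbius inversion. Sorting the series
`∑ Z n zⁿ / n` by the divisors `e ∣ m` thus gives `∑_{e ∣ m} (P e / e) · ∑_k (z^e)^k / k
= -∑_{e ∣ m} (P e / e) log (1 - z^e)`, and exponentiating `m` times this turns every summand
into the integer power `(1 - z^e)^(-(m/e) P e)`.
-/

open ArithmeticFunction ArithmeticFunction.Moebius Finset

/-- The `P(d)` of the paper: for `Z n = |Fix(fⁿ)|`, this counts the points of least period `d`. -/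
def moebiusInv (Z : ℕ → ℤ) (d : ℕ) : ℤ := ∑ d₁ ∈ d.divisors, μ d₁ * Z (d / d₁)

theorem sum_divisors_moebiusInv (Z : ℕ → ℤ) {n : ℕ} (hn : n ≠ 0) :
    ∑ e ∈ n.divisors, moebiusInv Z e = Z n := by
  refine sum_eq_iff_sum_mul_moebius_eq.mpr (fun d _ => ?_) n (Nat.pos_of_ne_zero hn)
  rw [moebiusInv, ← Nat.sum_divisorsAntidiagonal (fun a b => (μ a : ℤ) * Z b)]
  rfl

theorem Nat.divisors_gcd_eq_filter {m n : ℕ} (hm : m ≠ 0) (hn : n ≠ 0) :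
    (n.gcd m).divisors = {e ∈ m.divisors | e ∣ n} := by
  ext e
  simp [Nat.dvd_gcd_iff, hm, hn, and_comm]

theorem sum_divisors_filter_moebiusInv {Z : ℕ → ℤ} {m n : ℕ}
    (hZ : ∀ n, Z n = Z (n.gcd m)) (hm : m ≠ 0) (hn : n ≠ 0) :
    ∑ e ∈ m.divisors with e ∣ n, moebiusInv Z e = Z n := by
  rw [← Nat.divisors_gcd_eq_filter hm hn, sum_divisors_moebiusInv Z (by simp [hn]), ← hZ]

theorem Complex.hasSum_ite_dvd_pow_div {e : ℕ} (he : e ≠ 0) {z : ℂ} (hz : ‖z‖ < 1) :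
    HasSum (fun n : ℕ => if e ∣ n then z ^ n / n else 0) (-log (1 - z ^ e) / e) := by
  have hze : ‖z ^ e‖ < 1 := by
    rw [norm_pow]; exact pow_lt_one₀ (norm_nonneg z) hz he
  have hinj : Function.Injective (e * ·) := mul_right_injective₀ he
  refine (hinj.hasSum_iff ?_).mp ?_
  · rintro n hn
    rw [if_neg]
    rintro ⟨k, rfl⟩
    exact hn ⟨k, rfl⟩
  · have hterm (k : ℕ) : (if e ∣ e * k then z ^ (e * k) / ((e * k : ℕ) : ℂ) else 0) =
        (z ^ e) ^ k / k / e := by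
      rw [if_pos (dvd_mul_right e k), pow_mul, Nat.cast_mul, div_div, mul_comm (e : ℂ)]
    simpa only [Function.comp_def, hterm] using
      (hasSum_taylorSeries_neg_log hze).div_const (e : ℂ)

theorem hasSum_mul_pow_div_of_gcd {Z : ℕ → ℤ} {m : ℕ} (hZ : ∀ n, Z n = Z (n.gcd m))
    (hm : m ≠ 0) {z : ℂ} (hz : ‖z‖ < 1) :
    HasSum (fun n : ℕ => (Z n : ℂ) * z ^ n / n)
      (∑ e ∈ m.divisors, (moebiusInv Z e : ℂ) * (-Complex.log (1 - z ^ e) / e)) := by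
  have hsplit (n : ℕ) : (Z n : ℂ) * z ^ n / n =
      ∑ e ∈ m.divisors, (moebiusInv Z e : ℂ) * (if e ∣ n then z ^ n / n else 0) := by
    rcases eq_or_ne n 0 with rfl | hn
    · simp
    simp only [mul_ite, mul_zero, ← sum_filter, ← sum_mul, mul_div_assoc]
    rw [← sum_divisors_filter_moebiusInv hZ hm hn, Int.cast_sum]
  simp only [hsplit]
  exact hasSum_sum fun e he =>
    (Complex.hasSum_ite_dvd_pow_div (Nat.pos_of_mem_divisors he).ne' hz).mul_left _

theorem exp_tsum_pow_eq_prod_of_gcd {Z : ℕ → ℤ} {m : ℕ} (hZ : ∀ n, Z n = Z (n.gcd m))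
    {z : ℂ} (hz : ‖z‖ < 1) :
    (Complex.exp (∑' n : ℕ, ((Z (n + 1) : ℂ) * z ^ (n + 1)) / (n + 1))) ^ m =
      ∏ d ∈ m.divisors, (1 - z ^ d) ^ (-((m / d : ℕ) : ℤ) * moebiusInv Z d) := by
  rcases eq_or_ne m 0 with rfl | hm
  · simp
  have hsum : HasSum (fun n : ℕ => ((Z (n + 1) : ℂ) * z ^ (n + 1)) / (n + 1))
      (∑ e ∈ m.divisors, (moebiusInv Z e : ℂ) * (-Complex.log (1 - z ^ e) / e)) := by
    simpa using (hasSum_nat_add_iff' 1).mpr (hasSum_mul_pow_div_of_gcd hZ hm hz)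
  rw [hsum.tsum_eq, ← Complex.exp_nat_mul, mul_sum, Complex.exp_sum]
  refine prod_congr rfl fun e he => ?_
  have hem : e ∣ m := Nat.dvd_of_mem_divisors he
  have he0 : (e : ℂ) ≠ 0 := Nat.cast_ne_zero.mpr (Nat.pos_of_mem_divisors he).ne'
  have hze : ‖z ^ e‖ < 1 := by
    rw [norm_pow]; exact pow_lt_one₀ (norm_nonneg z) hz (Nat.pos_of_mem_divisors he).ne'
  have hne : 1 - z ^ e ≠ 0 := sub_ne_zero.mpr fun h => by simp [← h] at hze
  rw [← Complex.cpow_intCast, Complex.cpow_def_of_ne_zero hne]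
  simp only [Int.cast_mul, Int.cast_neg, Int.cast_natCast, Nat.cast_div hem he0]
  congr 1
  field_simp

theorem setOf_iterate_fixed_eq_gcd {X : Type*} {f : X → X} {m : ℕ} (hid : f^[m] = id)
    (n : ℕ) : {x | f^[n] x = x} = {x | f^[n.gcd m] x = x} := by
  ext x
  have hx : Function.IsPeriodicPt f m x := congrFun hid x
  exact ⟨fun h => Function.IsPeriodicPt.gcd h hx,
    fun h => Function.IsPeriodicPt.trans_dvd h (Nat.gcd_dvd_left n m)⟩

open ArithmeticFunction ArithmeticFunction.Moebius in
theorem zeta_periodic_map_product_formula_general {X : Type*} (f : X → X)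
    (m : ℕ) (hid : f^[m] = _root_.id)
    (z : ℂ) (hz : ‖z‖ < 1) :
    (Complex.exp (∑' n : ℕ,
        (({x : X | f^[n + 1] x = x}.ncard : ℂ) * z ^ (n + 1)) / (n + 1))) ^ m =
      ∏ d ∈ m.divisors,
        (1 - z ^ d) ^
          (-((m / d : ℕ) : ℤ) *
            ∑ d₁ ∈ d.divisors, μ d₁ * ({x : X | f^[d / d₁] x = x}.ncard : ℤ)) := by
  have hZ (n : ℕ) :
      ({x : X | f^[n] x = x}.ncard : ℤ) = {x : X | f^[n.gcd m] x = x}.ncard := by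
    rw [setOf_iterate_fixed_eq_gcd hid n]
  simpa only [moebiusInv, Int.cast_natCast] using exp_tsum_pow_eq_prod_of_gcd hZ hz

open ArithmeticFunction ArithmeticFunction.Moebius in
/-- Product formula for the zeta function of a periodic map: if `f^m = id` with `m`
the least period and `Z n = |Fix(fⁿ)|`, `P d = ∑_{d₁ ∣ d} μ(d₁) Z(d/d₁)`, then the
`m`-th power of `exp (∑_{n≥1} Z(n) zⁿ/n)` equals `∏_{d ∣ m} (1 - z^d)^{-(m/d)·P(d)}`. -/
theorem zeta_periodic_map_product_formula {X : Type*} (f : X → X)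
    (m : ℕ) (hm : 1 ≤ m) (hid : f^[m] = _root_.id)
    (hleast : ∀ k : ℕ, 1 ≤ k → f^[k] = _root_.id → m ≤ k)
    (hfin : ∀ n : ℕ, {x : X | f^[n] x = x}.Finite)
    (z : ℂ) (hz : ‖z‖ < 1) :
    (Complex.exp (∑' n : ℕ,
        (({x : X | f^[n + 1] x = x}.ncard : ℂ) * z ^ (n + 1)) / (n + 1))) ^ m =
      ∏ d ∈ m.divisors,
        (1 - z ^ d) ^
          (-((m / d : ℕ) : ℤ) *
            ∑ d₁ ∈ d.divisors, μ d₁ * ({x : X | f^[d / d₁] x = x}.ncard : ℤ)) :=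
  zeta_periodic_map_product_formula_general f m hid z hz
end

section
/- Let φ: ℤ[1/3] → ℤ[1/3] be the endomorphism g ↦ 2g. Then for every n ≥ 1, the cokernel ℤ[1/3]/(2ⁿ - 1)ℤ[1/3] is finite of cardinality (2ⁿ - 1)/3^{v₃(2ⁿ-1)}, i.e., the Reidemeister number R(φⁿ) = |2ⁿ - 1| · |2ⁿ - 1|₃. -/
/-!
Since `3` is a unit in `ℤ[1/3]`, the ideal generated by `2ⁿ - 1` is generated by its prime-to-`3`
part `d = (2ⁿ - 1) / 3^{v₃(2ⁿ-1)}`. As `3` is already invertible modulo `d`, inverting it does not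
change `ℤ/dℤ`, so `ℤ[1/3]/(2ⁿ - 1) ≅ ℤ/dℤ`, which has `d` elements.
-/

namespace IsLocalization

variable {A : Type*} [CommRing A] {M : Submonoid A} (S : Type*) [CommRing S] [Algebra A S]
  [IsLocalization M S] {I : Ideal A} (hM : ∀ m : M, IsUnit (Ideal.Quotient.mk I m))

theorem map_le_ker_lift_quotientMk : I.map (algebraMap A S) ≤ RingHom.ker (lift (S := S) hM) :=
  Ideal.map_le_iff_le_comap.2 fun a ha => by
    simp [lift_eq, Ideal.Quotient.eq_zero_iff_mem.2 ha]

noncomputable def quotientEquivOfIsUnit : A ⧸ I ≃+* S ⧸ I.map (algebraMap A S) :=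
  RingEquiv.ofRingHom (Ideal.quotientMap _ (algebraMap A S) Ideal.le_comap_map)
    (Ideal.Quotient.lift _ (lift hM) fun _ hs =>
      RingHom.mem_ker.1 (map_le_ker_lift_quotientMk S hM hs))
    (Ideal.Quotient.ringHom_ext <| ringHom_ext M <| RingHom.ext fun a => by
      simp only [RingHom.comp_apply, Ideal.Quotient.lift_mk, lift_eq, Ideal.quotientMap_mk,
        RingHom.id_apply])
    (Ideal.Quotient.ringHom_ext <| RingHom.ext fun a => by
      simp only [RingHom.comp_apply, Ideal.Quotient.lift_mk, lift_eq, Ideal.quotientMap_mk,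
        RingHom.id_apply])

end IsLocalization

noncomputable def Localization.Away.quotientSpanNatEquivZMod {p : ℤ} {d : ℕ}
    (hp : IsUnit (p : ZMod d)) :
    Localization.Away p ⧸ Ideal.span {(d : Localization.Away p)} ≃+* ZMod d :=
  have hpowers : ∀ m : Submonoid.powers p,
      IsUnit (Ideal.Quotient.mk (Ideal.span {(d : ℤ)}) m) := by
    rintro ⟨_, j, rfl⟩
    refine (isUnit_map_iff (Int.quotientSpanNatEquivZMod d) _).1 ?_
    simpa using hp.pow j
  (Ideal.quotEquivOfEq (by rw [Ideal.map_span, Set.image_singleton, map_natCast])).trans <|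
    (IsLocalization.quotientEquivOfIsUnit _ hpowers).symm.trans (Int.quotientSpanNatEquivZMod d)

theorem Ideal.span_natCast_eq_span_div_pow_padicValNat {R : Type*} [CommRing R] {p : ℕ}
    (hp : IsUnit (p : R)) (m : ℕ) :
    Ideal.span {(m : R)} = Ideal.span {((m / p ^ padicValNat p m : ℕ) : R)} := by
  conv_lhs => rw [← Nat.mul_div_cancel' (pow_padicValNat_dvd (p := p) (n := m)), Nat.cast_mul,
    Nat.cast_pow]
  exact Ideal.span_singleton_mul_left_unit (hp.pow _) _

theorem Nat.coprime_div_pow_padicValNat {p : ℕ} (hp : p.Prime) {m : ℕ} (hm : m ≠ 0) :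
    p.Coprime (m / p ^ padicValNat p m) := by
  simpa only [Nat.factorization_def m hp] using Nat.coprime_ordCompl hp hm

/-- For the endomorphism `g ↦ 2g` of `ℤ[1/3]`, the Reidemeister number of its `n`-th
iterate, i.e. the cardinality of the cokernel `ℤ[1/3]/(2ⁿ-1)ℤ[1/3]`, is finite and
equals `(2ⁿ - 1)/3^{v₃(2ⁿ-1)} = |2ⁿ-1| ⬝ |2ⁿ-1|₃`. -/
theorem reidemeister_number_doubling_Z_one_third (n : ℕ) (hn : 1 ≤ n) :
    Finite (Localization.Away (3 : ℤ) ⧸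
        Ideal.span {((2 : Localization.Away (3 : ℤ)) ^ n - 1)}) ∧
    Nat.card (Localization.Away (3 : ℤ) ⧸
        Ideal.span {((2 : Localization.Away (3 : ℤ)) ^ n - 1)}) =
      (2 ^ n - 1) / 3 ^ (padicValNat 3 (2 ^ n - 1)) := by
  set R := Localization.Away (3 : ℤ)
  set m := 2 ^ n - 1
  set d := m / 3 ^ padicValNat 3 m
  have hm : m ≠ 0 := by
    have := Nat.one_lt_two_pow (n := n) (by omega)
    omega
  have h3 : IsUnit ((3 : ℕ) : R) := by
    simpa using IsLocalization.Away.algebraMap_isUnit (S := R) (3 : ℤ)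
  have hspan : Ideal.span {(2 : R) ^ n - 1} = Ideal.span {(d : R)} := by
    rw [← Ideal.span_natCast_eq_span_div_pow_padicValNat h3 m, Nat.cast_sub Nat.one_le_two_pow,
      Nat.cast_pow, Nat.cast_ofNat, Nat.cast_one]
  have hd : Nat.Coprime 3 d := Nat.coprime_div_pow_padicValNat Nat.prime_three hm
  have : NeZero d := ⟨fun h => by simp [h] at hd⟩
  let e := (Ideal.quotEquivOfEq hspan).trans <| Localization.Away.quotientSpanNatEquivZMod (d := d)
    (by simpa using (ZMod.isUnit_iff_coprime 3 d).2 hd)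
  exact ⟨Finite.of_equiv _ e.symm.toEquiv, by rw [Nat.card_congr e.toEquiv, Nat.card_zmod]⟩
end

section
/- Let L ⊆ N be modules over a commutative ring R and g ∈ R. If the map x ↦ gx is injective on N and multiplication by g maps L into L with the property L ∩ gN = gL, then |N/gN| = |(N/L)/g(N/L)| · |L/gL| whenever all these quotients are finite (equality of cardinalities, with the convention that the formula holds when the right side is finite). -/
/-!
Reducing `L` modulo a submodule `P` gives an exact sequence
`0 → L/(L ∩ P) → N/P → N/(L + P) → 0`, so `|N/P| = |N/(L + P)| · |L/(L ∩ P)|` for any `P`.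
For `P = gN`, the middle term `N/(L + gN)` is `(N/L)/g(N/L)`, and `L ∩ gN = gL` turns the
last factor into `|L/gL|`.
-/

namespace Submodule

variable {R M : Type*} [Ring R] [AddCommGroup M] [Module R M]

theorem card_quotient_eq_card_quotient_sup_mul_card_quotient_comap (P L : Submodule R M) :
    Nat.card (M ⧸ P) = Nat.card (M ⧸ P ⊔ L) * Nat.card (L ⧸ P.comap L.subtype) := by
  have hker : LinearMap.ker (P.mkQ ∘ₗ L.subtype) = P.comap L.subtype := by
    rw [LinearMap.ker_comp, ker_mkQ]
  have hrange : LinearMap.range (P.mkQ ∘ₗ L.subtype) = L.map P.mkQ := by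
    rw [LinearMap.range_comp, range_subtype]
  rw [card_eq_card_quotient_mul_card (L.map P.mkQ), mul_comm,
    Nat.card_congr (quotientQuotientEquivQuotientSup P L).toEquiv, ← hrange, ← hker,
    Nat.card_congr (P.mkQ ∘ₗ L.subtype).quotKerEquivRange.toEquiv]

end Submodule

namespace Submodule

variable {R M : Type*} [CommRing R] [AddCommGroup M] [Module R M]

theorem map_lsmul_top_quotient_eq_map_mkQ (L : Submodule R M) (g : R) :
    map (LinearMap.lsmul R (M ⧸ L) g) ⊤ = map L.mkQ (map (LinearMap.lsmul R M g) ⊤) := by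
  have hcomm : LinearMap.lsmul R (M ⧸ L) g ∘ₗ L.mkQ = L.mkQ ∘ₗ LinearMap.lsmul R M g := rfl
  rw [map_top, map_top, ← LinearMap.range_comp_of_range_eq_top _ (range_mkQ L), hcomm,
    LinearMap.range_comp]

theorem comap_subtype_map_lsmul_top_of_inf_eq {L : Submodule R M} {g : R}
    (hcap : L ⊓ map (LinearMap.lsmul R M g) ⊤ = map (LinearMap.lsmul R M g) L) :
    comap L.subtype (map (LinearMap.lsmul R M g) ⊤) = map (LinearMap.lsmul R L g) ⊤ := by
  apply map_injective_of_injective L.injective_subtype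
  have hcomm : L.subtype ∘ₗ LinearMap.lsmul R L g = LinearMap.lsmul R M g ∘ₗ L.subtype := rfl
  rw [map_comap_subtype, hcap, ← map_comp, hcomm, map_comp, map_subtype_top]

end Submodule

theorem miles_index_formula_general {R M : Type*} [CommRing R] [AddCommGroup M] [Module R M]
    (L : Submodule R M) (g : R)
    (hcap : L ⊓ Submodule.map (LinearMap.lsmul R M g) ⊤ =
      Submodule.map (LinearMap.lsmul R M g) L) :
    Nat.card (M ⧸ Submodule.map (LinearMap.lsmul R M g) (⊤ : Submodule R M)) =
      Nat.card ((M ⧸ L) ⧸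
          Submodule.map (LinearMap.lsmul R (M ⧸ L) g) (⊤ : Submodule R (M ⧸ L))) *
        Nat.card (↥L ⧸ Submodule.map (LinearMap.lsmul R ↥L g) (⊤ : Submodule R ↥L)) := by
  rw [Submodule.card_quotient_eq_card_quotient_sup_mul_card_quotient_comap _ L, sup_comm,
    Submodule.comap_subtype_map_lsmul_top_of_inf_eq hcap,
    Submodule.map_lsmul_top_quotient_eq_map_mkQ,
    Nat.card_congr (Submodule.quotientQuotientEquivQuotientSup L _).toEquiv]

/-- Miles' index formula: for `R`-modules `L ⊆ N` and `g ∈ R` with `x ↦ gx` injective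
on `N`, `gL ⊆ L` and `L ∩ gN = gL`, one has `|N/gN| = |(N/L)/g(N/L)| · |L/gL|`
whenever all these quotients are finite. -/
theorem miles_index_formula {R M : Type*} [CommRing R] [AddCommGroup M] [Module R M]
    (L : Submodule R M) (g : R)
    (hinj : Function.Injective fun x : M => g • x)
    (hmap : Submodule.map (LinearMap.lsmul R M g) L ≤ L)
    (hcap : L ⊓ Submodule.map (LinearMap.lsmul R M g) ⊤ =
      Submodule.map (LinearMap.lsmul R M g) L)
    (h1 : Finite (M ⧸ Submodule.map (LinearMap.lsmul R M g) (⊤ : Submodule R M)))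
    (h2 : Finite ((M ⧸ L) ⧸
      Submodule.map (LinearMap.lsmul R (M ⧸ L) g) (⊤ : Submodule R (M ⧸ L))))
    (h3 : Finite (↥L ⧸ Submodule.map (LinearMap.lsmul R ↥L g) (⊤ : Submodule R ↥L))) :
    Nat.card (M ⧸ Submodule.map (LinearMap.lsmul R M g) (⊤ : Submodule R M)) =
      Nat.card ((M ⧸ L) ⧸
          Submodule.map (LinearMap.lsmul R (M ⧸ L) g) (⊤ : Submodule R (M ⧸ L))) *
        Nat.card (↥L ⧸ Submodule.map (LinearMap.lsmul R ↥L g) (⊤ : Submodule R ↥L)) :=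
  miles_index_formula_general L g hcap
end

section
/- Let L ⊆ N be modules over a commutative ring R and g ∈ R such that N/L is finite and multiplication by g is injective on N, with gL ⊆ L. Then N/gN and L/gL have the same cardinality: |N/gN| = |L/gL|. -/
/-!
Multiplication by `g` is an isomorphism `N ≅ gN` carrying `L` onto `gL`, so `[gN : gL] = [N : L]`.
Computing the index of `gL` in `N` through `gN` and through `L` gives
`[N : gN] · [N : L] = [N : L] · [L : gL]`, and `[N : L]` is finite and nonzero, so it cancels.
With `Nat.card` sending infinite types to `0`, the same computation covers the infinite case.
-/

open Function

@[to_additive]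
theorem Subgroup.index_range_eq_relIndex_map {G : Type*} [Group G] {f : G →* G}
    (hf : Injective f) {H : Subgroup G} (hH : H.index ≠ 0) (hHf : H.map f ≤ H) :
    f.range.index = (H.map f).relIndex H := by
  refine Nat.eq_of_mul_eq_mul_left (Nat.pos_of_ne_zero hH) ?_
  rw [← H.index_map_of_injective hf, ← relIndex_mul_index hHf, mul_comm]

theorem Nat.finite_iff_of_card_eq {α β : Type*} [Nonempty α] [Nonempty β]
    (h : Nat.card α = Nat.card β) : Finite α ↔ Finite β := by
  rw [← Nat.card_pos_iff.trans (and_iff_right ‹_›), h,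
    Nat.card_pos_iff.trans (and_iff_right ‹_›)]

namespace Submodule

variable {R M : Type*} [CommRing R] [AddCommGroup M] [Module R M]

theorem card_quotient_eq_relIndex_map_subtype (L : Submodule R M) (p : Submodule R L) :
    Nat.card (L ⧸ p) = (p.map L.subtype).toAddSubgroup.relIndex L.toAddSubgroup := by
  change p.toAddSubgroup.index = _
  rw [AddSubgroup.relIndex]
  congr 1
  ext x
  change x ∈ p ↔ (x : M) ∈ p.map L.subtype
  simp

theorem map_lsmul_le (L : Submodule R M) (g : R) : L.map (LinearMap.lsmul R M g) ≤ L := by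
  rintro _ ⟨x, hx, rfl⟩
  exact L.smul_mem g hx

theorem map_subtype_map_lsmul_top (L : Submodule R M) (g : R) :
    (map (LinearMap.lsmul R L g) ⊤).map L.subtype = L.map (LinearMap.lsmul R M g) := by
  rw [← map_comp, show L.subtype ∘ₗ LinearMap.lsmul R L g = LinearMap.lsmul R M g ∘ₗ L.subtype
    from rfl, map_comp, map_subtype_top]

end Submodule

theorem miles_finite_index_quotients_general {R M : Type*} [CommRing R] [AddCommGroup M]
    [Module R M] (L : Submodule R M) (g : R)
    (hfin : Finite (M ⧸ L))
    (hinj : Function.Injective fun x : M => g • x) :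
    (Finite (M ⧸ Submodule.map (LinearMap.lsmul R M g) (⊤ : Submodule R M)) ↔
      Finite (↥L ⧸ Submodule.map (LinearMap.lsmul R ↥L g) (⊤ : Submodule R ↥L))) ∧
    Nat.card (M ⧸ Submodule.map (LinearMap.lsmul R M g) (⊤ : Submodule R M)) =
      Nat.card (↥L ⧸ Submodule.map (LinearMap.lsmul R ↥L g) (⊤ : Submodule R ↥L)) := by
  have hcard : Nat.card (M ⧸ Submodule.map (LinearMap.lsmul R M g) (⊤ : Submodule R M)) =
      Nat.card (↥L ⧸ Submodule.map (LinearMap.lsmul R ↥L g) (⊤ : Submodule R ↥L)) := by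
    change (Submodule.map (LinearMap.lsmul R M g) ⊤).toAddSubgroup.index = _
    rw [Submodule.map_top, LinearMap.range_toAddSubgroup,
      L.card_quotient_eq_relIndex_map_subtype, L.map_subtype_map_lsmul_top,
      Submodule.map_toAddSubgroup]
    exact AddSubgroup.index_range_eq_relIndex_map hinj
      (AddSubgroup.index_ne_zero_of_finite (hH := hfin)) (L.map_lsmul_le g)
  exact ⟨Nat.finite_iff_of_card_eq hcard, hcard⟩

/-- If `N/L` is finite, multiplication by `g` is injective on `N` and maps `L` into
`L`, then `|N/gN| = |L/gL|` (in particular one is finite iff the other is). -/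
theorem miles_finite_index_quotients {R M : Type*} [CommRing R] [AddCommGroup M]
    [Module R M] (L : Submodule R M) (g : R)
    (hfin : Finite (M ⧸ L))
    (hinj : Function.Injective fun x : M => g • x)
    (hmap : Submodule.map (LinearMap.lsmul R M g) L ≤ L) :
    (Finite (M ⧸ Submodule.map (LinearMap.lsmul R M g) (⊤ : Submodule R M)) ↔
      Finite (↥L ⧸ Submodule.map (LinearMap.lsmul R ↥L g) (⊤ : Submodule R ↥L))) ∧
    Nat.card (M ⧸ Submodule.map (LinearMap.lsmul R M g) (⊤ : Submodule R M)) =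
      Nat.card (↥L ⧸ Submodule.map (LinearMap.lsmul R ↥L g) (⊤ : Submodule R ↥L)) :=
  miles_finite_index_quotients_general L g hfin hinj
end
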